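/- The Zeeman fine topology on Minkowski space is strictly finer than the Euclidean topology: every Euclidean-open set is Zeeman-open, and there exists a Zeeman-open set (namely a punctured-cone ball (B_E(x;r) \ N(x)) ∪ {x}) that is not Euclidean-open. -/

import Mathlib

noncomputable section

/-- Minkowski space: `ℝ⁴` with the Euclidean topology/metric structure. -/
abbrev Mink : Type := EuclideanSpace ℝ (Fin 4)

/-- The Minkowski quadratic form `Q(v) = −v₀² + v₁² + v₂² + v₃²`. -/
def Q (v : Mink) : ℝ := -(v 0) ^ 2 + (v 1) ^ 2 + (v 2) ^ 2 + (v 3) ^ 2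

/-- A spacelike hyperplane: a 3-dimensional affine subspace all of whose nonzero
direction vectors are spacelike (`Q > 0`). -/
def IsSpacelikeHyperplane (B : Set Mink) : Prop :=
  ∃ (x : Mink) (H : Submodule ℝ Mink), Module.finrank ℝ H = 3 ∧
    (∀ w ∈ H, w ≠ 0 → 0 < Q w) ∧ B = {y | y - x ∈ H}

/-- A timelike line: an affine line with timelike direction (`Q < 0`). -/
def IsTimelikeLine (B : Set Mink) : Prop :=
  ∃ (x v : Mink), Q v < 0 ∧ B = {y | ∃ t : ℝ, y = x + t • v}

/-- A set is Zeeman-open iff its intersection with every spacelike hyperplane and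
every timelike line is open in the Euclidean subspace topology of that set. -/
def ZeemanOpen (A : Set Mink) : Prop :=
  ∀ B : Set Mink, IsSpacelikeHyperplane B ∨ IsTimelikeLine B →
    ∃ U : Set Mink, IsOpen U ∧ A ∩ B = U ∩ B

/-- The null cone at `x`. -/
def nullCone (x : Mink) : Set Mink := {y | Q (y - x) = 0}

/-- The Zeeman ball `B_Z(x;r) = (B_E(x;r) \ N(x)) ∪ {x}`. -/
def BZ (x : Mink) (r : ℝ) : Set Mink := (Metric.ball x r \ nullCone x) ∪ {x}

/-!
A spacelike hyperplane or a timelike line through `x` meets the null cone `N(x)` only in `x`,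
because `Q` has constant nonzero sign on its nonzero direction vectors. Hence on such a `B` the
Zeeman ball `B_Z(x;r)` agrees with the Euclidean ball when `x ∈ B`, and with the open set
`B_E(x;r) \ N(x)` when `x ∉ B`. It is not Euclidean-open because `x` is a limit of points
`x + t • v`, `t ≠ 0`, on a null line, none of which lie in `B_Z(x;r)`.
-/

open Filter Topology

lemma continuous_Q : Continuous Q := by
  unfold Q
  fun_prop

lemma isClosed_nullCone (x : Mink) : IsClosed (nullCone x) :=
  isClosed_eq (continuous_Q.comp (continuous_id.sub continuous_const)) continuous_const

lemma Q_smul (t : ℝ) (v : Mink) : Q (t • v) = t ^ 2 * Q v := by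
  simp only [Q, PiLp.smul_apply, smul_eq_mul]
  ring

lemma add_smul_mem_nullCone {v : Mink} (hv : Q v = 0) (x : Mink) (t : ℝ) :
    x + t • v ∈ nullCone x := by
  simp [nullCone, Q_smul, hv]

lemma exists_ne_zero_Q_eq_zero : ∃ v : Mink, v ≠ 0 ∧ Q v = 0 := by
  refine ⟨EuclideanSpace.single 0 1 + EuclideanSpace.single 1 1, fun h => ?_, ?_⟩
  · simpa using congrArg (· 0) h
  · simp [Q]

lemma IsSpacelikeHyperplane.eq_of_mem_nullCone {B : Set Mink} (hB : IsSpacelikeHyperplane B)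
    {x y : Mink} (hx : x ∈ B) (hy : y ∈ B) (hnull : y ∈ nullCone x) : y = x := by
  obtain ⟨x₀, H, -, hspace, rfl⟩ := hB
  have hyx : y - x ∈ H := by simpa using H.sub_mem hy hx
  by_contra hne
  exact (hspace _ hyx (sub_ne_zero.mpr hne)).ne' hnull

lemma IsTimelikeLine.eq_of_mem_nullCone {B : Set Mink} (hB : IsTimelikeLine B)
    {x y : Mink} (hx : x ∈ B) (hy : y ∈ B) (hnull : y ∈ nullCone x) : y = x := by
  obtain ⟨x₀, v, htime, rfl⟩ := hB
  obtain ⟨s, rfl⟩ := hx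
  obtain ⟨t, rfl⟩ := hy
  have hdiff : x₀ + t • v - (x₀ + s • v) = (t - s) • v := by rw [sub_smul]; abel
  have hQ : (t - s) ^ 2 * Q v = 0 := by rw [← Q_smul, ← hdiff]; exact hnull
  obtain rfl : t = s := by simpa [sub_eq_zero, htime.ne] using hQ
  rfl

lemma eq_of_mem_nullCone_of_spacelike_or_timelike {B : Set Mink}
    (hB : IsSpacelikeHyperplane B ∨ IsTimelikeLine B) {x y : Mink} (hx : x ∈ B) (hy : y ∈ B)
    (hnull : y ∈ nullCone x) : y = x :=
  hB.elim (·.eq_of_mem_nullCone hx hy hnull) (·.eq_of_mem_nullCone hx hy hnull)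

lemma BZ_inter_of_mem {x : Mink} {r : ℝ} (hr : 0 < r) {B : Set Mink} (hx : x ∈ B)
    (hB : ∀ y ∈ B, y ∈ nullCone x → y = x) : BZ x r ∩ B = Metric.ball x r ∩ B := by
  ext y
  by_cases hyx : y = x
  · subst hyx
    simp [BZ, hx, hr]
  · constructor
    · rintro ⟨⟨hball, -⟩ | hyx', hy⟩
      exacts [⟨hball, hy⟩, (hyx hyx').elim]
    · rintro ⟨hball, hy⟩
      exact ⟨Or.inl ⟨hball, fun hnull => hyx (hB y hy hnull)⟩, hy⟩

lemma BZ_inter_of_notMem {x : Mink} {r : ℝ} {B : Set Mink} (hx : x ∉ B) :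
    BZ x r ∩ B = (Metric.ball x r \ nullCone x) ∩ B := by
  ext y
  by_cases hyx : y = x
  · subst hyx
    simp [hx]
  · simp [BZ, hyx]

lemma IsOpen.zeemanOpen {A : Set Mink} (hA : IsOpen A) : ZeemanOpen A :=
  fun _ _ => ⟨A, hA, rfl⟩

lemma zeemanOpen_BZ (x : Mink) {r : ℝ} (hr : 0 < r) : ZeemanOpen (BZ x r) := by
  intro B hB
  by_cases hx : x ∈ B
  · exact ⟨_, Metric.isOpen_ball,
      BZ_inter_of_mem hr hx fun _ hy => eq_of_mem_nullCone_of_spacelike_or_timelike hB hx hy⟩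
  · exact ⟨_, Metric.isOpen_ball.sdiff (isClosed_nullCone x), BZ_inter_of_notMem hx⟩

lemma not_isOpen_BZ (x : Mink) (r : ℝ) : ¬ IsOpen (BZ x r) := by
  intro hopen
  obtain ⟨v, hv0, hv⟩ := exists_ne_zero_Q_eq_zero
  have hlim : Tendsto (fun t : ℝ => x + t • v) (𝓝[≠] 0) (𝓝 x) :=
    ((continuous_const.add (continuous_id.smul continuous_const)).tendsto' 0 x
      (by simp)).mono_left nhdsWithin_le_nhds
  obtain ⟨t, hmem, ht⟩ :=
    ((hlim.eventually (hopen.mem_nhds (Or.inr rfl))).and self_mem_nhdsWithin).exists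
  rcases hmem with ⟨-, hnull⟩ | hx
  · exact hnull (add_smul_mem_nullCone hv x t)
  · exact smul_ne_zero ht hv0 (by simpa using hx)

/-- The Zeeman fine topology on Minkowski space is strictly finer than
the Euclidean topology: every Euclidean-open set is Zeeman-open, and some Zeeman
ball `(B_E(x;r) \ N(x)) ∪ {x}` is Zeeman-open but not Euclidean-open. -/
theorem stmt_5 :
    (∀ A : Set Mink, IsOpen A → ZeemanOpen A) ∧
    (∃ (x : Mink) (r : ℝ), 0 < r ∧ ZeemanOpen (BZ x r) ∧ ¬ IsOpen (BZ x r)) :=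
  ⟨fun _ hA => hA.zeemanOpen, 0, 1, one_pos, zeemanOpen_BZ 0 one_pos, not_isOpen_BZ 0 1⟩

end
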